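/- Let t, t' be binary trees with the same number of leaves, σ a bijection from the leaves of t to the leaves of t', and τ a state of t. Then there is at most one state τ' of t' such that W(t', τ')_{σ(ℓ)} = W(t, τ)_ℓ for every leaf ℓ of t; moreover, if such a τ' exists, then |τ'⁻¹(1)| = |τ⁻¹(1)| and |τ'⁻¹(0)| = |τ⁻¹(0)| (equivalently, α_τ = α_{τ'} for every 0 < α < 1). -/

import Mathlib

/-- Finite ordered rooted binary trees. -/
inductive BTree where
  | leaf : BTree
  | node : BTree → BTree → BTree
deriving DecidableEq

/-- Positions (vertices) in a binary tree: `false` = go to the left child,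
`true` = go to the right child. -/
abbrev Pos := List Bool

/-- The subtree of `t` at position `p`, if `p` stays inside `t`. -/
def BTree.subtreeAt : BTree → Pos → Option BTree
  | t, [] => some t
  | .leaf, _ :: _ => none
  | .node l r, b :: p => (if b then r else l).subtreeAt p

/-- `p` is an internal (trivalent) vertex of `t`. -/
def IsInternal (t : BTree) (p : Pos) : Prop :=
  ∃ l r, t.subtreeAt p = some (BTree.node l r)

/-- `p` is a leaf of `t`. -/
def IsLeafPos (t : BTree) (p : Pos) : Prop :=
  t.subtreeAt p = some BTree.leaf

/-- The number of leaves of a binary tree. -/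
def BTree.leaves : BTree → ℕ
  | .leaf => 1
  | .node l r => l.leaves + r.leaves

/-- The word `W(t,τ)_ℓ` in the free monoid on the letters `a_j = (j, false)`,
`b_j = (j, true)`, read along the root-to-leaf path `p`; the state `τ` is given as a
total function on positions (only its values at internal vertices on the path matter). -/
def Wword (τ : Pos → Fin 2) (p : Pos) : List (ℕ × Bool) :=
  (List.range p.length).filterMap fun i =>
    let s : ℕ := ((List.range (i + 1)).map fun r => ((τ (p.take r) : ℕ))).sum
    if s = 0 then none else some (s - 1, p.getD i false)

/-- Recursive computation of the word with a running prefix-sum accumulator. -/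
def mkW : ℕ → (Pos → Fin 2) → List Bool → List (ℕ × Bool)
  | _, _, [] => []
  | s, τ, d :: ds =>
      if s + (τ [] : ℕ) = 0 then mkW (s + (τ [] : ℕ)) (fun q => τ (d :: q)) ds
      else (s + (τ [] : ℕ) - 1, d) :: mkW (s + (τ [] : ℕ)) (fun q => τ (d :: q)) ds

lemma wword_aux : ∀ (p : List Bool) (τ : Pos → Fin 2) (s : ℕ),
    ((List.range p.length).filterMap fun i =>
      if s + ((List.range (i + 1)).map fun r => ((τ (p.take r) : ℕ))).sum = 0 then none
      else some (s + ((List.range (i + 1)).map fun r => ((τ (p.take r) : ℕ))).sum - 1,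
        p.getD i false)) = mkW s τ p := by
  intro p
  induction p with
  | nil => intro τ s; simp [mkW]
  | cons d ds ih =>
      intro τ s
      have hr : ∀ i : ℕ, ((List.range (i + 1 + 1)).map
          fun r => ((τ ((d :: ds).take r) : ℕ))).sum
          = (τ [] : ℕ) + ((List.range (i + 1)).map
            fun r => (((fun q => τ (d :: q)) (ds.take r) : ℕ))).sum := by
        intro i
        rw [List.range_succ_eq_map]
        simp [List.map_map, Function.comp_def]
      rw [List.length_cons, List.range_succ_eq_map, List.filterMap_cons,
        List.filterMap_map]
      have h2 : (List.filterMap ((fun i =>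
          if s + ((List.range (i + 1)).map fun r => ((τ ((d :: ds).take r) : ℕ))).sum = 0
            then none
            else some (s + ((List.range (i + 1)).map
              fun r => ((τ ((d :: ds).take r) : ℕ))).sum - 1, (d :: ds).getD i false))
          ∘ Nat.succ) (List.range ds.length))
          = mkW (s + (τ [] : ℕ)) (fun q => τ (d :: q)) ds := by
        rw [← ih (fun q => τ (d :: q)) (s + (τ [] : ℕ))]
        apply List.filterMap_congr
        intro i _
        simp only [Function.comp_apply, hr i, ← Nat.add_assoc]
        rfl
      rw [h2]
      have h1 : ((List.range 1).map fun r => ((τ ((d :: ds).take r) : ℕ))).sum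
          = (τ [] : ℕ) := by
        show (List.map _ [0]).sum = _
        simp
      by_cases h0 : s + (τ [] : ℕ) = 0
      · have hs : s = 0 := by omega
        have ht : (τ [] : ℕ) = 0 := by omega
        simp [mkW, h1, h0, hs, ht]
      · have h0' : ¬ (s = 0 ∧ τ [] = 0) := fun ⟨a, b⟩ => h0 (by simp [a, b])
        simp [mkW, h1, h0, h0']

lemma wword_eq_mkW (τ : Pos → Fin 2) (p : Pos) : Wword τ p = mkW 0 τ p := by
  have := wword_aux p τ 0
  simp only [Nat.zero_add] at this
  rw [← this]
  rfl

lemma mkW_length_le : ∀ (ds : List Bool) (s : ℕ) (τ : Pos → Fin 2),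
    (mkW s τ ds).length ≤ ds.length := by
  intro ds
  induction ds with
  | nil => intro s τ; simp [mkW]
  | cons d ds ih =>
      intro s τ
      by_cases h0 : s + (τ [] : ℕ) = 0 <;> simp only [mkW, h0, if_pos, if_neg, if_true,
        if_false, List.length_cons]
      · exact le_trans (ih _ _) (Nat.le_succ _)
      · simpa using ih _ _

lemma mkW_length_pos : ∀ (ds : List Bool) (s : ℕ) (τ : Pos → Fin 2), s ≠ 0 →
    (mkW s τ ds).length = ds.length := by
  intro ds
  induction ds with
  | nil => intro s τ _; simp [mkW]
  | cons d ds ih =>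
      intro s τ hs
      have h0 : s + (τ [] : ℕ) ≠ 0 := by omega
      simp only [mkW, h0, if_neg, if_false, List.length_cons]
      rw [ih _ _ h0]

lemma mkW_inj : ∀ (ds : List Bool) (s : ℕ) (τ₁ τ₂ : Pos → Fin 2),
    mkW s τ₁ ds = mkW s τ₂ ds →
    ∀ i < ds.length, τ₁ (ds.take i) = τ₂ (ds.take i) := by
  intro ds
  induction ds with
  | nil => intro s τ₁ τ₂ _ i hi; simp at hi
  | cons d ds ih =>
      intro s τ₁ τ₂ hw i hi
      have hlt : (τ₁ [] : ℕ) < 2 := (τ₁ []).isLt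
      have hlt2 : (τ₂ [] : ℕ) < 2 := (τ₂ []).isLt
      have key : (τ₁ [] : ℕ) = (τ₂ [] : ℕ) ∧
          mkW (s + (τ₁ [] : ℕ)) (fun q => τ₁ (d :: q)) ds
            = mkW (s + (τ₂ [] : ℕ)) (fun q => τ₂ (d :: q)) ds := by
        by_cases h1 : s + (τ₁ [] : ℕ) = 0 <;> by_cases h2 : s + (τ₂ [] : ℕ) = 0
        · refine ⟨by omega, ?_⟩
          rw [h1, h2]
          simp only [mkW, h1, h2, if_pos] at hw
          exact hw
        · exfalso
          simp only [mkW, h1, h2, if_pos, if_neg, if_false] at hw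
          have hlen := congrArg List.length hw
          have e1 := mkW_length_le ds 0 (fun q => τ₁ (d :: q))
          have e2 := mkW_length_pos ds _ (fun q => τ₂ (d :: q)) h2
          rw [List.length_cons, e2] at hlen
          omega
        · exfalso
          simp only [mkW, h1, h2, if_pos, if_neg, if_false] at hw
          have hlen := congrArg List.length hw
          have e1 := mkW_length_le ds 0 (fun q => τ₂ (d :: q))
          have e2 := mkW_length_pos ds _ (fun q => τ₁ (d :: q)) h1
          rw [List.length_cons, e2] at hlen
          omega
        · simp only [mkW, h1, h2, if_neg, if_false, List.cons.injEq, Prod.mk.injEq] at hw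
          obtain ⟨⟨hv, -⟩, htail⟩ := hw
          have hv' : (τ₁ [] : ℕ) = (τ₂ [] : ℕ) := by omega
          refine ⟨hv', ?_⟩
          rw [hv']
          rw [hv'] at htail
          exact htail
      obtain ⟨hv, htail⟩ := key
      rw [hv] at htail
      match i with
      | 0 => exact Fin.ext hv
      | Nat.succ j =>
          have hj : j < ds.length := by simpa using hi
          have := ih _ _ _ htail j hj
          simpa using this

/-- `lastVal w` is (index of last letter) + 1, or 0 for the empty word. -/
def lastVal : List (ℕ × Bool) → ℕ
  | [] => 0
  | [x] => x.1 + 1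
  | _ :: y :: w => lastVal (y :: w)

def lastB (w : List (ℕ × Bool)) : ℕ := lastVal (w.filter fun y => y.2)

def wF (w : List (ℕ × Bool)) : ℕ := lastVal w - lastB w

lemma lastVal_cons (x : ℕ × Bool) (w : List (ℕ × Bool)) (hw : w ≠ []) :
    lastVal (x :: w) = lastVal w := by
  match w with
  | [] => exact absurd rfl hw
  | y :: w => rfl

lemma lastVal_eq_zero_iff (w : List (ℕ × Bool)) : lastVal w = 0 ↔ w = [] := by
  induction w with
  | nil => simp [lastVal]
  | cons x w ih =>
      constructor
      · intro h
        match w, ih with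
        | [], _ => simp [lastVal] at h
        | y :: w, ih =>
            rw [lastVal_cons x (y :: w) (by simp)] at h
            exact absurd (ih.mp h) (by simp)
      · intro h; simp at h

/-- Sum of the state values along the path. -/
def tot (τ : Pos → Fin 2) : List Bool → ℕ
  | [] => 0
  | d :: ds => (τ [] : ℕ) + tot (fun q => τ (d :: q)) ds

/-- Sum of state values strictly before (and including position of) the last `true`. -/
def totB (τ : Pos → Fin 2) : List Bool → ℕ
  | [] => 0
  | d :: ds => if true ∈ ds then (τ [] : ℕ) + totB (fun q => τ (d :: q)) ds
      else if d then (τ [] : ℕ) else 0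

/-- Sum of state values at positions after the final `true` (vertices whose leftmost
leaf is this path's end). -/
def pathC (τ : Pos → Fin 2) : List Bool → ℕ
  | [] => 0
  | d :: ds => (if d = true ∨ true ∈ ds then 0 else (τ [] : ℕ))
      + pathC (fun q => τ (d :: q)) ds

lemma tot_eq_totB_add_pathC : ∀ (ds : List Bool) (τ : Pos → Fin 2),
    tot τ ds = (if true ∈ ds then totB τ ds else 0) + pathC τ ds := by
  intro ds
  induction ds with
  | nil => intro τ; simp [tot, totB, pathC]
  | cons d ds ih =>
      intro τ
      by_cases hds : true ∈ ds
      · have hmem : true ∈ d :: ds := List.mem_cons_of_mem _ hds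
        simp only [tot, totB, pathC, if_pos hds, if_pos hmem, ih,
          if_pos (Or.inr hds : d = true ∨ true ∈ ds)]
        omega
      · cases d
        · have hmem : ¬ true ∈ (false : Bool) :: ds := by simp [hds]
          simp only [tot, totB, pathC, if_neg hds, if_neg hmem, ih]
          have : ¬ (false = true ∨ true ∈ ds) := by simp [hds]
          simp only [if_neg this]
          omega
        · have hmem : true ∈ (true : Bool) :: ds := by simp
          simp only [tot, totB, pathC, if_pos hmem, if_neg hds, ih]
          simp only [eq_self_iff_true, true_or, if_true, if_neg hds]
          try omega

lemma lastVal_mkW : ∀ (ds : List Bool), ds ≠ [] → ∀ (s : ℕ) (τ : Pos → Fin 2),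
    lastVal (mkW s τ ds) = s + tot τ ds := by
  intro ds
  induction ds with
  | nil => intro h; exact absurd rfl h
  | cons d ds ih =>
      intro _ s τ
      by_cases hds : ds = []
      · subst hds
        by_cases h0 : s + (τ [] : ℕ) = 0
        · simp [mkW, h0, lastVal, tot]
          try omega
        · have h0' : ¬ (s = 0 ∧ τ [] = 0) := fun ⟨a, b⟩ => h0 (by simp [a, b])
          simp [mkW, h0, h0', lastVal, tot]
          try omega
      · by_cases h0 : s + (τ [] : ℕ) = 0
        · simp only [mkW, h0, if_pos]
          rw [ih hds _ _, tot]
          omega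
        · simp only [mkW, h0, if_neg, if_false]
          have hne : mkW (s + (τ [] : ℕ)) (fun q => τ (d :: q)) ds ≠ [] := by
            intro he
            have := congrArg List.length he
            rw [mkW_length_pos ds _ _ h0] at this
            simp at this
            exact hds this
          rw [lastVal_cons _ _ hne, ih hds _ _, tot]
          omega

lemma lastB_mkW : ∀ (ds : List Bool) (s : ℕ) (τ : Pos → Fin 2),
    lastB (mkW s τ ds) = if true ∈ ds then s + totB τ ds else 0 := by
  intro ds
  induction ds with
  | nil => intro s τ; simp [mkW, lastB, lastVal]
  | cons d ds ih =>
      intro s τ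
      set s' := s + (τ [] : ℕ) with hs'
      set τ' : Pos → Fin 2 := fun q => τ (d :: q) with hτ'
      have ihds := ih s' τ'
      by_cases hds : true ∈ ds
      · -- last true is inside ds
        have hmem : true ∈ d :: ds := List.mem_cons_of_mem _ hds
        have hgoal : (if true ∈ d :: ds then s + totB τ (d :: ds) else 0)
            = s' + totB τ' ds := by
          rw [if_pos hmem, totB, if_pos hds, ← hτ']
          omega
        rw [hgoal]
        rw [if_pos hds] at ihds
        by_cases h0 : s' = 0
        · simp only [mkW, ← hs', h0, if_pos]
          rw [← h0]; exact ihds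
        · simp only [mkW, ← hs', if_neg h0, if_false]
          have hpos : lastB (mkW s' τ' ds) ≠ 0 := by rw [ihds]; omega
          have hfil : (mkW s' τ' ds).filter (fun y => y.2) ≠ [] := by
            intro he
            apply hpos
            unfold lastB
            rw [he]
            rfl
          unfold lastB
          rw [← ihds]
          unfold lastB
          cases d
          · simp only [List.filter_cons]
            norm_num
            rfl
          · simp only [List.filter_cons]
            norm_num
            rw [lastVal_cons _ _ hfil]
      · by_cases hd : d = true
        · -- d is the last (only) true
          subst hd
          have hmem : true ∈ (true : Bool) :: ds := by simp
          have hgoal : (if true ∈ (true : Bool) :: ds then s + totB τ ((true : Bool) :: ds)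
              else 0) = s' := by
            rw [if_pos hmem, totB, if_neg hds]
            simp [hs']
          rw [hgoal]
          rw [if_neg hds] at ihds
          have hfil : (mkW s' τ' ds).filter (fun y => y.2) = [] := by
            have := ihds
            unfold lastB at this
            exact (lastVal_eq_zero_iff _).mp this
          by_cases h0 : s' = 0
          · simp only [mkW, ← hs', h0, if_pos]
            rw [h0] at ihds
            exact ihds
          · simp only [mkW, ← hs', if_neg h0, if_false]
            unfold lastB
            simp only [List.filter_cons]
            norm_num
            rw [hfil, lastVal]
            omega
        · -- no true at all
          have hd' : d = false := by cases d; rfl; exact absurd rfl hd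
          subst hd'
          have hmem : ¬ true ∈ (false : Bool) :: ds := by simp [hds]
          rw [if_neg hmem]
          rw [if_neg hds] at ihds
          by_cases h0 : s' = 0
          · simp only [mkW, ← hs', h0, if_pos]
            rw [h0] at ihds
            exact ihds
          · simp only [mkW, ← hs', if_neg h0, if_false]
            unfold lastB
            simp only [List.filter_cons]
            norm_num
            exact ihds

/-- The number of 1-vertices on the path whose leftmost leaf is the path's end,
read off from the word alone. -/
lemma wF_wword (τ : Pos → Fin 2) (p : Pos) : wF (Wword τ p) = pathC τ p := by
  rcases p with - | ⟨d, ds⟩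
  · simp [Wword, wF, lastVal, lastB, pathC]
  · rw [wword_eq_mkW]
    unfold wF
    rw [lastVal_mkW _ (by simp) 0 τ, lastB_mkW]
    have := tot_eq_totB_add_pathC (d :: ds) τ
    by_cases h : true ∈ d :: ds
    · rw [if_pos h] at this ⊢; omega
    · rw [if_neg h] at this ⊢; omega

/-- List of all leaf positions of a tree, left to right. -/
def leafList : BTree → List Pos
  | .leaf => [[]]
  | .node l r => (leafList l).map (false :: ·) ++ (leafList r).map (true :: ·)

/-- List of all internal positions of a tree. -/
def intList : BTree → List Pos
  | .leaf => []
  | .node l r => [] :: ((intList l).map (false :: ·) ++ (intList r).map (true :: ·))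

lemma mem_leafList : ∀ (t : BTree) (p : Pos), p ∈ leafList t ↔ IsLeafPos t p := by
  intro t
  induction t with
  | leaf =>
      intro p
      rcases p with - | ⟨b, q⟩
      · simp [leafList, IsLeafPos, BTree.subtreeAt]
      · simp [leafList, IsLeafPos, BTree.subtreeAt]
  | node l r ihl ihr =>
      intro p
      rcases p with - | ⟨b, q⟩
      · simp [leafList, IsLeafPos, BTree.subtreeAt]
      · cases b <;>
          simp [leafList, IsLeafPos, BTree.subtreeAt, ihl q, ihr q, IsLeafPos] <;> rfl

lemma mem_intList : ∀ (t : BTree) (p : Pos), p ∈ intList t ↔ IsInternal t p := by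
  intro t
  induction t with
  | leaf =>
      intro p
      rcases p with - | ⟨b, q⟩
      · simp [intList, IsInternal, BTree.subtreeAt]
      · simp [intList, IsInternal, BTree.subtreeAt]
  | node l r ihl ihr =>
      intro p
      rcases p with - | ⟨b, q⟩
      · simp [intList, IsInternal, BTree.subtreeAt]
      · cases b <;>
          simp [intList, IsInternal, BTree.subtreeAt, ihl q, ihr q, IsInternal] <;> rfl

lemma nodup_aux {l1 l2 : List Pos} (h1 : l1.Nodup) (h2 : l2.Nodup) :
    ((l1.map (false :: ·)) ++ (l2.map (true :: ·))).Nodup := by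
  refine List.Nodup.append (h1.map ?_) (h2.map ?_) ?_
  · intro a b hab; simpa using hab
  · intro a b hab; simpa using hab
  · intro x hx hy
    simp only [List.mem_map] at hx hy
    obtain ⟨a, -, rfl⟩ := hx
    obtain ⟨b, -, h⟩ := hy
    simp at h

lemma nodup_leafList : ∀ (t : BTree), (leafList t).Nodup := by
  intro t
  induction t with
  | leaf => simp [leafList]
  | node l r ihl ihr => exact nodup_aux ihl ihr

lemma nodup_intList : ∀ (t : BTree), (intList t).Nodup := by
  intro t
  induction t with
  | leaf => simp [intList]
  | node l r ihl ihr =>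
      refine List.Nodup.cons ?_ (nodup_aux ihl ihr)
      intro h
      rcases List.mem_append.mp h with h | h <;>
        · simp only [List.mem_map] at h
          obtain ⟨a, -, h⟩ := h
          simp at h

lemma length_leafList : ∀ (t : BTree), (leafList t).length = t.leaves := by
  intro t
  induction t with
  | leaf => simp [leafList, BTree.leaves]
  | node l r ihl ihr => simp [leafList, BTree.leaves, ihl, ihr]

lemma length_intList : ∀ (t : BTree), (intList t).length + 1 = t.leaves := by
  intro t
  induction t with
  | leaf => simp [intList, BTree.leaves]
  | node l r ihl ihr =>
      simp only [intList, BTree.leaves, List.length_cons, List.length_append,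
        List.length_map]
      omega

lemma sum_map_add {α : Type*} (l : List α) (f g : α → ℕ) :
    (l.map fun x => f x + g x).sum = (l.map f).sum + (l.map g).sum := by
  induction l with
  | nil => simp
  | cons a l ih => simp [ih]; omega

/-- Exactly one leaf of every tree is an all-`false` path. -/
lemma sum_leftmost (c : ℕ) : ∀ (t : BTree),
    ((leafList t).map fun ℓ => if true ∈ ℓ then 0 else c).sum = c := by
  intro t
  induction t with
  | leaf => simp [leafList]
  | node l r ihl ihr =>
      simp only [leafList, List.map_append, List.sum_append, List.map_map]
      have h1 : ((leafList l).map ((fun ℓ => if true ∈ ℓ then 0 else c) ∘ (false :: ·))).sum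
          = c := by
        have he : (leafList l).map ((fun ℓ => if true ∈ ℓ then 0 else c) ∘ (false :: ·))
            = (leafList l).map (fun ℓ => if true ∈ ℓ then 0 else c) := by
          apply List.map_congr_left
          intro a _
          simp
        rw [he, ihl]
      have h2 : ((leafList r).map ((fun ℓ => if true ∈ ℓ then 0 else c) ∘ (true :: ·))).sum
          = 0 := by
        have : ((leafList r).map ((fun ℓ => if true ∈ ℓ then 0 else c) ∘ (true :: ·)))
            = (leafList r).map (fun _ => 0) := by
          apply List.map_congr_left
          intro a _
          simp
        rw [this]
        simp
      rw [h1, h2]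
      omega

/-- KEY: the number of 1-vertices equals the sum over leaves of `pathC`. -/
lemma sum_int_eq_sum_leaf : ∀ (t : BTree) (τ : Pos → Fin 2),
    ((intList t).map fun p => ((τ p : ℕ))).sum = ((leafList t).map (pathC τ)).sum := by
  intro t
  induction t with
  | leaf => simp [intList, leafList, pathC]
  | node l r ihl ihr =>
      intro τ
      simp only [intList, leafList, List.map_cons, List.map_append, List.sum_cons,
        List.sum_append, List.map_map]
      have hl : ((intList l).map ((fun p => ((τ p : ℕ))) ∘ (false :: ·))).sum
          = ((leafList l).map (pathC (fun q => τ (false :: q)))).sum := ihl _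
      have hr : ((intList r).map ((fun p => ((τ p : ℕ))) ∘ (true :: ·))).sum
          = ((leafList r).map (pathC (fun q => τ (true :: q)))).sum := ihr _
      rw [hl, hr]
      have hrt : (leafList r).map (pathC τ ∘ (true :: ·))
          = (leafList r).map (pathC (fun q => τ (true :: q))) := by
        apply List.map_congr_left
        intro a _
        simp only [Function.comp_apply, pathC]
        simp
      have hlt : ((leafList l).map (pathC τ ∘ (false :: ·))).sum
          = ((leafList l).map fun ℓ => (if true ∈ ℓ then 0 else (τ [] : ℕ))
              + pathC (fun q => τ (false :: q)) ℓ).sum := by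
        congr 1
        apply List.map_congr_left
        intro a _
        simp only [Function.comp_apply, pathC]
        congr 1
        by_cases h : true ∈ a <;> simp [h]
      rw [hrt, hlt, sum_map_add, sum_leftmost]
      omega

def leftSpine : BTree → Pos
  | .leaf => []
  | .node l _ => false :: leftSpine l

lemma leftSpine_isLeaf : ∀ (t : BTree), IsLeafPos t (leftSpine t) := by
  intro t
  induction t with
  | leaf => rfl
  | node l r ihl => simpa [IsLeafPos, leftSpine, BTree.subtreeAt] using ihl

lemma subtreeAt_append : ∀ (p q : Pos) (t : BTree),
    t.subtreeAt (p ++ q) = (t.subtreeAt p).bind (fun u => u.subtreeAt q) := by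
  intro p
  induction p with
  | nil => intro q t; simp [BTree.subtreeAt]
  | cons b p ih =>
      intro q t
      cases t with
      | leaf => simp [BTree.subtreeAt]
      | node l r => simp [BTree.subtreeAt, ih]

/-- Every internal vertex is a proper prefix of some leaf. -/
lemma internal_extends_leaf {t : BTree} {p : Pos} (h : IsInternal t p) :
    ∃ q : Pos, q ≠ [] ∧ IsLeafPos t (p ++ q) := by
  obtain ⟨l, r, hs⟩ := h
  refine ⟨false :: leftSpine l, by simp, ?_⟩
  unfold IsLeafPos
  rw [subtreeAt_append, hs]
  simpa [Option.bind, BTree.subtreeAt, IsLeafPos] using leftSpine_isLeaf l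

lemma sum_map_val (l : List Pos) (g : Pos → Fin 2) :
    (l.map fun p => ((g p : ℕ))).sum = (l.filter fun p => g p = 1).length := by
  induction l with
  | nil => simp
  | cons a l ih =>
      simp only [List.map_cons, List.sum_cons, List.filter_cons]
      by_cases h : g a = 1
      · have : (g a : ℕ) = 1 := by rw [h]; rfl
        simp [h, this, ih]
        omega
      · have h0 : g a = 0 := by omega
        have : (g a : ℕ) = 0 := by rw [h0]; rfl
        simp [h, this, ih]

lemma filter_length_split (l : List Pos) (g : Pos → Fin 2) :
    (l.filter fun p => g p = 0).length + (l.filter fun p => g p = 1).length = l.length := by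
  induction l with
  | nil => simp
  | cons a l ih =>
      simp only [List.filter_cons]
      by_cases h : g a = 1
      · have h0 : ¬ g a = 0 := by rw [h]; decide
        simp [h, h0]
        omega
      · have h0 : g a = 0 := by omega
        simp [h, h0]
        omega

lemma ncard_internal (u : BTree) (g : Pos → Fin 2) (v : Fin 2) :
    {p : Pos | IsInternal u p ∧ g p = v}.ncard
      = ((intList u).filter fun p => g p = v).length := by
  have hset : {p : Pos | IsInternal u p ∧ g p = v}
      = ↑(((intList u).filter fun p => g p = v).toFinset) := by
    ext x
    simp [List.mem_filter, mem_intList]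
  rw [hset, Set.ncard_coe_finset, List.toFinset_card_of_nodup]
  exact (nodup_intList u).filter _

def leafFintype (u : BTree) : Fintype {p : Pos // IsLeafPos u p} :=
  Fintype.subtype (leafList u).toFinset (by intro x; simp [mem_leafList])

lemma sum_over_leaves (u : BTree) [F : Fintype {p : Pos // IsLeafPos u p}] (g : Pos → ℕ) :
    (∑ x : {p : Pos // IsLeafPos u p}, g x.1) = ((leafList u).map g).sum := by
  rw [← List.sum_toFinset g (nodup_leafList u)]
  exact (Finset.sum_subtype _ (fun x => by simp [mem_leafList]) g).symm

lemma transfer_sum (t t' : BTree)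
    (σ : {p : Pos // IsLeafPos t p} ≃ {p : Pos // IsLeafPos t' p})
    (τ τ' : Pos → Fin 2)
    (h : ∀ ℓ : {p : Pos // IsLeafPos t p}, Wword τ' (σ ℓ).1 = Wword τ ℓ.1) :
    ((intList t').map fun p => ((τ' p : ℕ))).sum
      = ((intList t).map fun p => ((τ p : ℕ))).sum := by
  letI := leafFintype t
  letI := leafFintype t'
  have h1 : ((intList t').map fun p => ((τ' p : ℕ))).sum
      = ((leafList t').map (fun q => wF (Wword τ' q))).sum := by
    rw [sum_int_eq_sum_leaf]
    congr 1
    apply List.map_congr_left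
    intro a _
    rw [wF_wword]
  have h2 : ((leafList t').map (fun q => wF (Wword τ' q))).sum
      = ∑ x : {p : Pos // IsLeafPos t' p}, wF (Wword τ' x.1) :=
    (sum_over_leaves t' _).symm
  have h3 : (∑ x : {p : Pos // IsLeafPos t' p}, wF (Wword τ' x.1))
      = ∑ y : {p : Pos // IsLeafPos t p}, wF (Wword τ' (σ y).1) :=
    (Equiv.sum_comp σ (fun x => wF (Wword τ' x.1))).symm
  have h4 : (∑ y : {p : Pos // IsLeafPos t p}, wF (Wword τ' (σ y).1))
      = ∑ y : {p : Pos // IsLeafPos t p}, pathC τ y.1 := by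
    apply Finset.sum_congr rfl
    intro y _
    rw [h y, wF_wword]
  have h5 : (∑ y : {p : Pos // IsLeafPos t p}, pathC τ y.1)
      = ((leafList t).map (pathC τ)).sum := sum_over_leaves t _
  rw [h1, h2, h3, h4, h5, sum_int_eq_sum_leaf]

/-- Let `t, t'` be binary trees with the same number of leaves, `σ` a
bijection from the leaves of `t` to the leaves of `t'`, and `τ` a state of `t`. Then
there is at most one state `τ'` of `t'` with `W(t',τ')_{σ ℓ} = W(t,τ)_ℓ` for every leaf
`ℓ` of `t` (i.e. any two such states agree on the internal vertices of `t'`); moreover,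
if such a `τ'` exists then `|τ'⁻¹(1)| = |τ⁻¹(1)|` and `|τ'⁻¹(0)| = |τ⁻¹(0)|` (as sets of
internal vertices; equivalently `α_τ = α_{τ'}` for every `0 < α < 1`). -/
theorem stmt13 (t t' : BTree) (hn : t.leaves = t'.leaves)
    (σ : {p : Pos // IsLeafPos t p} ≃ {p : Pos // IsLeafPos t' p})
    (τ : Pos → Fin 2) :
    (∀ τ'₁ τ'₂ : Pos → Fin 2,
      (∀ ℓ : {p : Pos // IsLeafPos t p}, Wword τ'₁ (σ ℓ).1 = Wword τ ℓ.1) →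
      (∀ ℓ : {p : Pos // IsLeafPos t p}, Wword τ'₂ (σ ℓ).1 = Wword τ ℓ.1) →
      ∀ p : Pos, IsInternal t' p → τ'₁ p = τ'₂ p) ∧
    (∀ τ' : Pos → Fin 2,
      (∀ ℓ : {p : Pos // IsLeafPos t p}, Wword τ' (σ ℓ).1 = Wword τ ℓ.1) →
      {p : Pos | IsInternal t' p ∧ τ' p = 1}.ncard
          = {p : Pos | IsInternal t p ∧ τ p = 1}.ncard ∧
      {p : Pos | IsInternal t' p ∧ τ' p = 0}.ncard
          = {p : Pos | IsInternal t p ∧ τ p = 0}.ncard) := by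
  constructor
  · intro τ'₁ τ'₂ h1 h2 p hp
    obtain ⟨q, hq, hleaf⟩ := internal_extends_leaf hp
    obtain ⟨ℓ, hℓ⟩ : ∃ ℓ, σ ℓ = (⟨p ++ q, hleaf⟩ : {p : Pos // IsLeafPos t' p}) :=
      ⟨σ.symm ⟨p ++ q, hleaf⟩, by simp⟩
    have hw : Wword τ'₁ (p ++ q) = Wword τ'₂ (p ++ q) := by
      have e1 := h1 ℓ
      have e2 := h2 ℓ
      rw [hℓ] at e1 e2
      exact e1.trans e2.symm
    rw [wword_eq_mkW, wword_eq_mkW] at hw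
    have hlen : p.length < (p ++ q).length := by
      rw [List.length_append]
      cases q
      · exact absurd rfl hq
      · simp
    have := mkW_inj (p ++ q) 0 τ'₁ τ'₂ hw p.length hlen
    simpa [List.take_left] using this
  · intro τ' h
    have hsum := transfer_sum t t' σ τ τ' h
    rw [sum_map_val, sum_map_val] at hsum
    have hl1 := length_intList t
    have hl2 := length_intList t'
    have hs1 := filter_length_split (intList t) τ
    have hs2 := filter_length_split (intList t') τ'
    rw [ncard_internal t' τ' 1, ncard_internal t τ 1,
      ncard_internal t' τ' 0, ncard_internal t τ 0]
    omega
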